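/- arXiv:2303.14529 — 2 statements merged into one kernel-verified Lean document; each statement's English description precedes it below -/
import Mathlib

section
/- For every formula A of L, every DI9 valuation α for L, every real number j, and every truth value W ∈ {T, F}: Iα(A, j) = W if and only if, for every j-extension β of α, β*(A) = W. -/
/-- Formulas of the propositional language L: countably many atoms,
negation, and disjunction. -/
inductive Form : Type
  | atom : ℕ → Form
  | neg : Form → Form
  | disj : Form → Form → Form

/-- The three values: the truth values `T`, `F`, and the value `O`
(absence of truth value). -/
inductive Val3 : Type
  | T : Val3
  | F : Val3
  | O : Val3
  deriving DecidableEq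

/-- A DI9 valuation for L: a function from (atomic formula, real number)
to {T, F, O} satisfying persistence of truth values and weak bivalence. -/
structure DI9Val where
  val : ℕ → ℝ → Val3
  mono_T : ∀ (n : ℕ) (j h : ℝ), j < h → val n j = Val3.T → val n h = Val3.T
  mono_F : ∀ (n : ℕ) (j h : ℝ), j < h → val n j = Val3.F → val n h = Val3.F
  eventually_tv : ∀ n : ℕ, ∃ j : ℝ, val n j = Val3.T ∨ val n j = Val3.F

-- The DI9 classical interpretation α* associated to a DI9 valuation α.
open Classical in
noncomputable def cstar (α : DI9Val) : Form → Val3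
  | .atom n => if ∃ j : ℝ, α.val n j = Val3.T then Val3.T else Val3.F
  | .neg B => if cstar α B = Val3.F then Val3.T else Val3.F
  | .disj B C => if cstar α B = Val3.T ∨ cstar α C = Val3.T then Val3.T else Val3.F

/-- β is a j-extension of α: they agree on all atomic formulas at all times ≤ j. -/
def IsJExt (β α : DI9Val) (j : ℝ) : Prop :=
  ∀ (n : ℕ) (h : ℝ), h ≤ j → β.val n h = α.val n h

-- The DI9 interpretation Iα associated to a DI9 valuation α.
open Classical in
noncomputable def interp (α : DI9Val) : Form → ℝ → Val3
  | .atom n, j => α.val n j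
  | .neg B, j =>
      match interp α B j with
      | Val3.T => Val3.F
      | Val3.F => Val3.T
      | Val3.O => Val3.O
  | .disj B C, j =>
      if ∀ β : DI9Val, IsJExt β α j → (cstar β B = Val3.T ∨ cstar β C = Val3.T) then
        Val3.T
      else if ∀ β : DI9Val, IsJExt β α j → (cstar β B = Val3.F ∧ cstar β C = Val3.F) then
        Val3.F
      else Val3.O

/-- A classical interpretation for L. -/
structure ClassInterp where
  val : Form → Val3
  tv : ∀ A : Form, val A = Val3.T ∨ val A = Val3.F
  neg_iff : ∀ B : Form, val (.neg B) = Val3.T ↔ val B = Val3.F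
  disj_iff : ∀ B C : Form, val (.disj B C) = Val3.T ↔
    (val B = Val3.T ∨ val C = Val3.T)

/-- A is a tautological consequence of Γ in the sense of classical semantics. -/
def TautConseq (Γ : Set Form) (A : Form) : Prop :=
  ∀ Ic : ClassInterp, (∀ B ∈ Γ, Ic.val B = Val3.T) → Ic.val A = Val3.T

/-- A is a DI9 logical consequence of Γ. -/
def DI9Conseq (Γ : Set Form) (A : Form) : Prop :=
  ∀ (j : ℝ) (α : DI9Val), (∀ B ∈ Γ, interp α B j = Val3.T) → interp α A j = Val3.T

lemma cstar_tv (β : DI9Val) (A : Form) : cstar β A = Val3.T ∨ cstar β A = Val3.F := by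
  cases A <;> simp only [cstar] <;> split <;> simp

lemma isJExt_refl (α : DI9Val) (j : ℝ) : IsJExt α α j := fun _ _ _ => rfl

lemma cstar_neg_eq_T (β : DI9Val) (B : Form) :
    cstar β (.neg B) = Val3.T ↔ cstar β B = Val3.F := by
  simp only [cstar]; split <;> simp_all

lemma cstar_neg_eq_F (β : DI9Val) (B : Form) :
    cstar β (.neg B) = Val3.F ↔ cstar β B = Val3.T := by
  rcases cstar_tv β B with h | h <;> simp only [cstar] <;> split <;> simp_all

lemma cstar_disj_eq_T (β : DI9Val) (B C : Form) :
    cstar β (.disj B C) = Val3.T ↔ (cstar β B = Val3.T ∨ cstar β C = Val3.T) := by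
  simp only [cstar]; split <;> simp_all

lemma cstar_disj_eq_F (β : DI9Val) (B C : Form) :
    cstar β (.disj B C) = Val3.F ↔ (cstar β B = Val3.F ∧ cstar β C = Val3.F) := by
  rcases cstar_tv β B with h | h <;> rcases cstar_tv β C with h' | h' <;>
    simp only [cstar] <;> split <;> simp_all

/-- The canonical j-extension of α that forces `F` after time j unless
the atom is already `T` at time j. -/
noncomputable def extF (α : DI9Val) (j : ℝ) : DI9Val where
  val n h := if h ≤ j then α.val n h else
    if α.val n j = Val3.T then Val3.T else Val3.F
  mono_T n a b hab h := by
    by_cases ha : a ≤ j <;> by_cases hb : b ≤ j <;> simp only [ha, hb, if_pos, if_neg,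
      if_true, if_false] at h ⊢
    · exact α.mono_T n a b hab h
    · rcases eq_or_lt_of_le ha with rfl | ha'
      · simp [h]
      · simp [α.mono_T n a j ha' h]
    · exact absurd (hab.trans_le hb).le ha
    · exact h
  mono_F n a b hab h := by
    by_cases ha : a ≤ j <;> by_cases hb : b ≤ j <;> simp only [ha, hb, if_pos, if_neg,
      if_true, if_false] at h ⊢
    · exact α.mono_F n a b hab h
    · rcases eq_or_lt_of_le ha with rfl | ha'
      · simp [h]
      · simp [α.mono_F n a j ha' h]
    · exact absurd (hab.trans_le hb).le ha
    · exact h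
  eventually_tv n := by
    refine ⟨j + 1, ?_⟩
    have : ¬ (j + 1 ≤ j) := by linarith
    simp only [this, if_false]
    split <;> simp

lemma extF_jext (α : DI9Val) (j : ℝ) : IsJExt (extF α j) α j :=
  fun _ _ hh => if_pos hh

lemma extF_atom_T (α : DI9Val) (j : ℝ) (n : ℕ) :
    cstar (extF α j) (.atom n) = Val3.T ↔ α.val n j = Val3.T := by
  have key : (∃ h : ℝ, (extF α j).val n h = Val3.T) ↔ α.val n j = Val3.T := by
    constructor
    · rintro ⟨h, hh⟩
      by_cases hle : h ≤ j
      · simp only [extF, hle, if_pos, if_true] at hh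
        rcases eq_or_lt_of_le hle with rfl | hlt
        · exact hh
        · exact α.mono_T n h j hlt hh
      · simp only [extF, hle, if_neg, if_false] at hh
        by_contra hc
        simp [hc] at hh
    · intro h
      exact ⟨j, by simp [extF, h]⟩
  simp only [cstar]
  split <;> simp_all

/-- The canonical j-extension of α that forces `T` after time j unless
the atom is already `F` at time j. -/
noncomputable def extT (α : DI9Val) (j : ℝ) : DI9Val where
  val n h := if h ≤ j then α.val n h else
    if α.val n j = Val3.F then Val3.F else Val3.T
  mono_T n a b hab h := by
    by_cases ha : a ≤ j <;> by_cases hb : b ≤ j <;> simp only [ha, hb, if_pos, if_neg,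
      if_true, if_false] at h ⊢
    · exact α.mono_T n a b hab h
    · rcases eq_or_lt_of_le ha with rfl | ha'
      · simp [h]
      · simp [α.mono_T n a j ha' h]
    · exact absurd (hab.trans_le hb).le ha
    · exact h
  mono_F n a b hab h := by
    by_cases ha : a ≤ j <;> by_cases hb : b ≤ j <;> simp only [ha, hb, if_pos, if_neg,
      if_true, if_false] at h ⊢
    · exact α.mono_F n a b hab h
    · rcases eq_or_lt_of_le ha with rfl | ha'
      · simp [h]
      · simp [α.mono_F n a j ha' h]
    · exact absurd (hab.trans_le hb).le ha
    · exact h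
  eventually_tv n := by
    refine ⟨j + 1, ?_⟩
    have : ¬ (j + 1 ≤ j) := by linarith
    simp only [this, if_false]
    split <;> simp

lemma extT_jext (α : DI9Val) (j : ℝ) : IsJExt (extT α j) α j :=
  fun _ _ hh => if_pos hh

lemma extT_val_gt (α : DI9Val) (j : ℝ) (n : ℕ) (hF : α.val n j ≠ Val3.F) :
    (extT α j).val n (j + 1) = Val3.T := by
  have : ¬ (j + 1 ≤ j) := by linarith
  simp [extT, this, hF]

theorem stmt_5 (A : Form) (α : DI9Val) (j : ℝ) (W : Val3)
    (hW : W = Val3.T ∨ W = Val3.F) :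
    interp α A j = W ↔ ∀ β : DI9Val, IsJExt β α j → cstar β A = W := by
  induction A generalizing W with
  | atom n =>
    rcases hW with rfl | rfl
    · constructor
      · intro h β hβ
        have hb : β.val n j = Val3.T := by rw [hβ n j le_rfl]; exact h
        simp only [cstar]
        rw [if_pos ⟨j, hb⟩]
      · intro H
        have h1 := H (extF α j) (extF_jext α j)
        exact (extF_atom_T α j n).mp h1
    · constructor
      · intro h β hβ
        simp only [interp] at h
        simp only [cstar]
        rw [if_neg]
        rintro ⟨k, hk⟩
        by_cases hle : k ≤ j
        · rw [hβ n k hle] at hk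
          rcases eq_or_lt_of_le hle with rfl | hlt
          · rw [h] at hk; exact absurd hk (by simp)
          · rw [α.mono_T n k j hlt hk] at h; exact absurd h (by simp)
        · have hbj : β.val n j = Val3.F := by rw [hβ n j le_rfl]; exact h
          have := β.mono_F n j k (not_le.mp hle) hbj
          rw [this] at hk; exact absurd hk (by simp)
      · intro H
        by_contra hc
        have h1 := H (extT α j) (extT_jext α j)
        have h2 : (extT α j).val n (j + 1) = Val3.T := extT_val_gt α j n hc
        simp only [cstar] at h1
        rw [if_pos ⟨j + 1, h2⟩] at h1
        exact absurd h1 (by simp)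
  | neg B ih =>
    rcases hW with rfl | rfl
    · have e1 : interp α (Form.neg B) j = Val3.T ↔ interp α B j = Val3.F := by
        simp only [interp]
        cases hB : interp α B j <;> simp
      rw [e1, ih Val3.F (Or.inr rfl)]
      constructor
      · intro H β hβ
        exact (cstar_neg_eq_T β B).mpr (H β hβ)
      · intro H β hβ
        exact (cstar_neg_eq_T β B).mp (H β hβ)
    · have e1 : interp α (Form.neg B) j = Val3.F ↔ interp α B j = Val3.T := by
        simp only [interp]
        cases hB : interp α B j <;> simp
      rw [e1, ih Val3.T (Or.inl rfl)]
      constructor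
      · intro H β hβ
        exact (cstar_neg_eq_F β B).mpr (H β hβ)
      · intro H β hβ
        exact (cstar_neg_eq_F β B).mp (H β hβ)
  | disj B C ihB ihC =>
    rcases hW with rfl | rfl
    · simp only [interp]
      constructor
      · intro h β hβ
        rw [cstar_disj_eq_T]
        by_cases hP : ∀ β : DI9Val, IsJExt β α j →
            (cstar β B = Val3.T ∨ cstar β C = Val3.T)
        · exact hP β hβ
        · rw [if_neg hP] at h
          split at h <;> exact absurd h (by simp)
      · intro H
        rw [if_pos (fun β hβ => (cstar_disj_eq_T β B C).mp (H β hβ))]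
    · simp only [interp]
      constructor
      · intro h β hβ
        rw [cstar_disj_eq_F]
        by_cases hP : ∀ β : DI9Val, IsJExt β α j →
            (cstar β B = Val3.T ∨ cstar β C = Val3.T)
        · rw [if_pos hP] at h; exact absurd h (by simp)
        · rw [if_neg hP] at h
          by_cases hQ : ∀ β : DI9Val, IsJExt β α j →
              (cstar β B = Val3.F ∧ cstar β C = Val3.F)
          · exact hQ β hβ
          · rw [if_neg hQ] at h; exact absurd h (by simp)
      · intro H
        have hQ : ∀ β : DI9Val, IsJExt β α j →
            (cstar β B = Val3.F ∧ cstar β C = Val3.F) :=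
          fun β hβ => (cstar_disj_eq_F β B C).mp (H β hβ)
        have hnP : ¬ ∀ β : DI9Val, IsJExt β α j →
            (cstar β B = Val3.T ∨ cstar β C = Val3.T) := by
          intro hP
          rcases hP α (isJExt_refl α j) with h | h
          · rw [(hQ α (isJExt_refl α j)).1] at h; exact absurd h (by simp)
          · rw [(hQ α (isJExt_refl α j)).2] at h; exact absurd h (by simp)
        rw [if_neg hnP, if_pos hQ]
end

section
/- Every DI9 logical truth is a tautology; that is, if Iα(A, j) = T for every DI9 valuation α for L and every real number j, then every classical interpretation for L assigns T to A. -/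
lemma interp_to_cstar (α : DI9Val) (A : Form) (j : ℝ) :
    (interp α A j = Val3.T → cstar α A = Val3.T) ∧
    (interp α A j = Val3.F → cstar α A = Val3.F) := by
  induction A with
  | atom n =>
    constructor
    · intro h
      simp only [cstar]
      rw [if_pos ⟨j, h⟩]
    · intro h
      simp only [cstar]
      rw [if_neg]
      rintro ⟨k, hk⟩
      rcases lt_trichotomy k j with hlt | rfl | hgt
      · have := α.mono_T n k j hlt hk
        rw [interp] at h; rw [this] at h; exact absurd h (by decide)
      · rw [interp] at h; rw [h] at hk; exact absurd hk (by decide)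
      · have := α.mono_F n j k hgt (by rw [interp] at h; exact h)
        rw [this] at hk; exact absurd hk (by decide)
  | neg B ih =>
    constructor
    · intro h
      rw [interp] at h
      simp only [cstar]
      rcases hb : interp α B j with _ | _ | _ <;> rw [hb] at h
      · exact absurd h (by decide)
      · rw [if_pos (ih.2 hb)]
      · exact absurd h (by decide)
    · intro h
      rw [interp] at h
      simp only [cstar]
      rcases hb : interp α B j with _ | _ | _ <;> rw [hb] at h
      · rw [if_neg]; rw [ih.1 hb]; decide
      · exact absurd h (by decide)
      · exact absurd h (by decide)
  | disj B C ihB ihC =>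
    have hself : IsJExt α α j := fun n h _ => rfl
    constructor
    · intro h
      rw [interp] at h
      by_cases h1 : ∀ β : DI9Val, IsJExt β α j → (cstar β B = Val3.T ∨ cstar β C = Val3.T)
      · simp only [cstar]
        rw [if_pos (h1 α hself)]
      · rw [if_neg h1] at h
        by_cases h2 : ∀ β : DI9Val, IsJExt β α j → (cstar β B = Val3.F ∧ cstar β C = Val3.F)
        · rw [if_pos h2] at h; exact absurd h (by decide)
        · rw [if_neg h2] at h; exact absurd h (by decide)
    · intro h
      rw [interp] at h
      by_cases h1 : ∀ β : DI9Val, IsJExt β α j → (cstar β B = Val3.T ∨ cstar β C = Val3.T)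
      · rw [if_pos h1] at h; exact absurd h (by decide)
      · rw [if_neg h1] at h
        by_cases h2 : ∀ β : DI9Val, IsJExt β α j → (cstar β B = Val3.F ∧ cstar β C = Val3.F)
        · obtain ⟨hb, hc⟩ := h2 α hself
          simp only [cstar]
          rw [if_neg (by rw [hb, hc]; simp)]
        · rw [if_neg h2] at h; exact absurd h (by decide)

theorem stmt_10 (A : Form)
    (h : ∀ (α : DI9Val) (j : ℝ), interp α A j = Val3.T) :
    ∀ Ic : ClassInterp, Ic.val A = Val3.T := by
  intro Ic
  -- constant valuation induced by Ic
  let α : DI9Val :=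
    { val := fun n _ => if Ic.val (.atom n) = Val3.T then Val3.T else Val3.F
      mono_T := by intro n j k _ h; simpa using h
      mono_F := by intro n j k _ h; simpa using h
      eventually_tv := by
        intro n
        refine ⟨0, ?_⟩
        by_cases hn : Ic.val (.atom n) = Val3.T <;> simp [hn] }
  have hc : ∀ B : Form, cstar α B = Ic.val B := by
    intro B
    induction B with
    | atom n =>
      simp only [cstar, α]
      rcases Ic.tv (.atom n) with ht | hf
      · simp [ht]
      · simp [hf]
    | neg C ih =>
      simp only [cstar, ih]
      rcases Ic.tv (.neg C) with ht | hf
      · rw [ht, if_pos ((Ic.neg_iff C).1 ht)]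
      · rw [hf, if_neg]
        intro hcf
        have := (Ic.neg_iff C).2 hcf
        rw [hf] at this; exact absurd this (by decide)
    | disj C D ihC ihD =>
      simp only [cstar, ihC, ihD]
      rcases Ic.tv (.disj C D) with ht | hf
      · rw [ht, if_pos ((Ic.disj_iff C D).1 ht)]
      · rw [hf, if_neg]
        intro hd
        have := (Ic.disj_iff C D).2 hd
        rw [hf] at this; exact absurd this (by decide)
  rw [← hc A]
  exact (interp_to_cstar α A 0).1 (h α 0)
end
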